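/- arXiv:2110.04516 — 2 statements merged into one kernel-verified Lean document; each statement's English description precedes it below -/
import Mathlib

section
/- For any MDC-ADMM value sequence (μ^(m), θ^(m))_{m≥0}, the sequence of objective values m ↦ S(μ^(m), θ^(m)) is non-increasing. -/
open Finset

/-- The ℓ₁ norm of a vector in ℝ^p. -/
noncomputable def l1norm {p : ℕ} (v : EuclideanSpace ℝ (Fin p)) : ℝ := ∑ k, |v k|

/-- Index set P = {(i,j) : 1 ≤ i < j ≤ n}. -/
abbrev PairIdx (n : ℕ) := {q : Fin n × Fin n // q.1 < q.2}

/-- The SPRclust objective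
`S(μ,θ) = (1/2)∑‖x_i−μ_i‖² + λ₁∑‖μ_i‖₁ + λ₂∑ min(‖θ_{ij}‖₂, τ)`. -/
noncomputable def Sobj (n p : ℕ) (x : Fin n → EuclideanSpace ℝ (Fin p))
    (lam1 lam2 tau : ℝ) (μ : Fin n → EuclideanSpace ℝ (Fin p))
    (θ : PairIdx n → EuclideanSpace ℝ (Fin p)) : ℝ :=
  ((1 : ℝ)/2) * ∑ i, ‖x i - μ i‖^2 + lam1 * ∑ i, l1norm (μ i)
    + lam2 * ∑ e : PairIdx n, min ‖θ e‖ tau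

/-- `S₁(μ,θ) = (1/2)∑‖x_i−μ_i‖² + λ₁∑‖μ_i‖₁ + λ₂∑‖θ_{ij}‖₂`. -/
noncomputable def S1 (n p : ℕ) (x : Fin n → EuclideanSpace ℝ (Fin p))
    (lam1 lam2 : ℝ) (μ : Fin n → EuclideanSpace ℝ (Fin p))
    (θ : PairIdx n → EuclideanSpace ℝ (Fin p)) : ℝ :=
  ((1 : ℝ)/2) * ∑ i, ‖x i - μ i‖^2 + lam1 * ∑ i, l1norm (μ i)
    + lam2 * ∑ e : PairIdx n, ‖θ e‖

/-- `S₂(θ) = λ₂ ∑ (‖θ_{ij}‖₂ − τ)₊`. -/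
noncomputable def S2 (n p : ℕ) (lam2 tau : ℝ)
    (θ : PairIdx n → EuclideanSpace ℝ (Fin p)) : ℝ :=
  lam2 * ∑ e : PairIdx n, max (‖θ e‖ - tau) 0

/-- The surrogate
`S_B(μ,θ) = (1/2)∑‖x_i−μ_i‖² + λ₁∑‖μ_i‖₁ + λ₂∑_{(i,j)∈P∖B}‖θ_{ij}‖₂ + λ₂τ|B|`. -/
noncomputable def SB (n p : ℕ) (x : Fin n → EuclideanSpace ℝ (Fin p))
    (lam1 lam2 tau : ℝ) (B : Finset (PairIdx n))
    (μ : Fin n → EuclideanSpace ℝ (Fin p))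
    (θ : PairIdx n → EuclideanSpace ℝ (Fin p)) : ℝ :=
  ((1 : ℝ)/2) * ∑ i, ‖x i - μ i‖^2 + lam1 * ∑ i, l1norm (μ i)
    + lam2 * ∑ e ∈ Bᶜ, ‖θ e‖ + lam2 * tau * B.card

/-- The active set `B(θ̂) = {(i,j) ∈ P : ‖θ̂_{ij}‖₂ ≥ τ}`. -/
noncomputable def activeSet (n p : ℕ) (tau : ℝ)
    (θhat : PairIdx n → EuclideanSpace ℝ (Fin p)) : Finset (PairIdx n) :=
  Finset.univ.filter (fun e => ‖θhat e‖ ≥ tau)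

/-- The feasible set `C = {(μ,θ) : θ_{ij} = μ_i − μ_j for all (i,j) ∈ P}`. -/
def Feas (n p : ℕ) :
    Set ((Fin n → EuclideanSpace ℝ (Fin p)) × (PairIdx n → EuclideanSpace ℝ (Fin p))) :=
  {z | ∀ e : PairIdx n, z.2 e = z.1 e.val.1 - z.1 e.val.2}


lemma Sobj_le_SB (n p : ℕ) (x : Fin n → EuclideanSpace ℝ (Fin p))
    (lam1 lam2 tau : ℝ) (hlam2 : 0 ≤ lam2) (B : Finset (PairIdx n))
    (μ : Fin n → EuclideanSpace ℝ (Fin p))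
    (θ : PairIdx n → EuclideanSpace ℝ (Fin p)) :
    Sobj n p x lam1 lam2 tau μ θ ≤ SB n p x lam1 lam2 tau B μ θ := by
  unfold Sobj SB
  have h1 : ∑ e : PairIdx n, min ‖θ e‖ tau ≤ ∑ e ∈ Bᶜ, ‖θ e‖ + tau * B.card := by
    rw [← Finset.sum_compl_add_sum B (fun e => min ‖θ e‖ tau)]
    have hA : ∑ e ∈ Bᶜ, min ‖θ e‖ tau ≤ ∑ e ∈ Bᶜ, ‖θ e‖ :=
      Finset.sum_le_sum (fun e _ => min_le_left _ _)
    have hB : ∑ e ∈ B, min ‖θ e‖ tau ≤ tau * B.card := by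
      calc ∑ e ∈ B, min ‖θ e‖ tau ≤ ∑ e ∈ B, tau :=
            Finset.sum_le_sum (fun e _ => min_le_right _ _)
        _ = tau * B.card := by rw [Finset.sum_const, nsmul_eq_mul, mul_comm]
    linarith
  nlinarith [mul_le_mul_of_nonneg_left h1 hlam2]

lemma SB_activeSet_eq (n p : ℕ) (x : Fin n → EuclideanSpace ℝ (Fin p))
    (lam1 lam2 tau : ℝ)
    (μ : Fin n → EuclideanSpace ℝ (Fin p))
    (θ : PairIdx n → EuclideanSpace ℝ (Fin p)) :
    SB n p x lam1 lam2 tau (activeSet n p tau θ) μ θ = Sobj n p x lam1 lam2 tau μ θ := by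
  unfold Sobj SB
  have h1 : ∑ e : PairIdx n, min ‖θ e‖ tau
      = ∑ e ∈ (activeSet n p tau θ)ᶜ, ‖θ e‖ + tau * (activeSet n p tau θ).card := by
    rw [← Finset.sum_compl_add_sum (activeSet n p tau θ) (fun e => min ‖θ e‖ tau)]
    congr 1
    · refine Finset.sum_congr rfl (fun e he => ?_)
      have : ¬ (‖θ e‖ ≥ tau) := by
        simpa [activeSet] using Finset.mem_compl.mp he
      exact min_eq_left (le_of_lt (lt_of_not_ge this))
    · have : ∀ e ∈ activeSet n p tau θ, min ‖θ e‖ tau = tau := by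
        intro e he
        have : ‖θ e‖ ≥ tau := by simpa [activeSet] using he
        exact min_eq_right this
      rw [Finset.sum_congr rfl this, Finset.sum_const, nsmul_eq_mul, mul_comm]
  rw [h1]; ring

/-- along any MDC-ADMM value sequence, the objective values
m ↦ S(μ^(m), θ^(m)) are non-increasing. -/
theorem mdc_admm_objective_antitone (n p : ℕ) (hn : 1 ≤ n) (hp : 1 ≤ p)
    (x : Fin n → EuclideanSpace ℝ (Fin p)) (lam1 lam2 tau : ℝ)
    (hlam1 : 0 ≤ lam1) (hlam2 : 0 ≤ lam2) (htau : 0 < tau)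
    (seq : ℕ → (Fin n → EuclideanSpace ℝ (Fin p)) × (PairIdx n → EuclideanSpace ℝ (Fin p)))
    (hfeas : ∀ m, seq m ∈ Feas n p)
    (hmin : ∀ m, ∀ z ∈ Feas n p,
      SB n p x lam1 lam2 tau (activeSet n p tau (seq m).2) (seq (m+1)).1 (seq (m+1)).2
        ≤ SB n p x lam1 lam2 tau (activeSet n p tau (seq m).2) z.1 z.2) :
    Antitone (fun m => Sobj n p x lam1 lam2 tau (seq m).1 (seq m).2) := by
  apply antitone_nat_of_succ_le
  intro m
  calc Sobj n p x lam1 lam2 tau (seq (m+1)).1 (seq (m+1)).2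
      ≤ SB n p x lam1 lam2 tau (activeSet n p tau (seq m).2) (seq (m+1)).1 (seq (m+1)).2 :=
        Sobj_le_SB n p x lam1 lam2 tau hlam2 _ _ _
    _ ≤ SB n p x lam1 lam2 tau (activeSet n p tau (seq m).2) (seq m).1 (seq m).2 :=
        hmin m (seq m) (hfeas m)
    _ = Sobj n p x lam1 lam2 tau (seq m).1 (seq m).2 := SB_activeSet_eq n p x lam1 lam2 tau _ _
end

section
/- Stationarity of the MDC-ADMM limit (second part of Theorem 2.1, stated via the anchored surrogate): for any MDC-ADMM value sequence (μ^(m), θ^(m))_{m≥0}, there exists m* such that for every m ≥ m*, the iterate (μ^(m), θ^(m)) is itself a global minimizer over C of its own anchored convex surrogate S_{B(θ^(m))}; i.e., S_{B(θ^(m))}(μ^(m), θ^(m)) ≤ S_{B(θ^(m))}(μ, θ) for all (μ,θ) ∈ C. -/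
open Finset

/-- stationarity of the MDC-ADMM limit, second part of Theorem 2.1:
along any MDC-ADMM value sequence, eventually every iterate is itself a global
minimizer over C of its own anchored convex surrogate S_{B(θ^(m))}. -/
theorem mdc_admm_limit_stationary (n p : ℕ) (hn : 1 ≤ n) (hp : 1 ≤ p)
    (x : Fin n → EuclideanSpace ℝ (Fin p)) (lam1 lam2 tau : ℝ)
    (hlam1 : 0 ≤ lam1) (hlam2 : 0 ≤ lam2) (htau : 0 < tau)
    (seq : ℕ → (Fin n → EuclideanSpace ℝ (Fin p)) × (PairIdx n → EuclideanSpace ℝ (Fin p)))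
    (hfeas : ∀ m, seq m ∈ Feas n p)
    (hmin : ∀ m, ∀ z ∈ Feas n p,
      SB n p x lam1 lam2 tau (activeSet n p tau (seq m).2) (seq (m+1)).1 (seq (m+1)).2
        ≤ SB n p x lam1 lam2 tau (activeSet n p tau (seq m).2) z.1 z.2) :
    ∃ mstar : ℕ, ∀ m ≥ mstar, ∀ z ∈ Feas n p,
      SB n p x lam1 lam2 tau (activeSet n p tau (seq m).2) (seq m).1 (seq m).2
        ≤ SB n p x lam1 lam2 tau (activeSet n p tau (seq m).2) z.1 z.2 := by
    classical
  set A : ℕ → Finset (PairIdx n) := fun m => activeSet n p tau (seq m).2 with hA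
  set c : ℕ → ℝ := fun m =>
    SB n p x lam1 lam2 tau (A m) (seq (m+1)).1 (seq (m+1)).2 with hc
  have hmin' : ∀ m, ∀ z ∈ Feas n p, c m ≤ SB n p x lam1 lam2 tau (A m) z.1 z.2 := by
    intro m z hz
    simpa [hc, hA] using hmin m z hz
  have hfac : ∀ m m', A m = A m' → c m = c m' := by
    intro m m' h
    have h1 : c m ≤ c m' := by
      calc c m ≤ SB n p x lam1 lam2 tau (A m) (seq (m'+1)).1 (seq (m'+1)).2 :=
            hmin' m (seq (m'+1)) (hfeas (m'+1))
        _ = c m' := by rw [h]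
    have h2 : c m' ≤ c m := by
      calc c m' ≤ SB n p x lam1 lam2 tau (A m') (seq (m+1)).1 (seq (m+1)).2 :=
            hmin' m' (seq (m+1)) (hfeas (m+1))
        _ = c m := by rw [← h]
    exact le_antisymm h1 h2
  have hstep : ∀ m, c (m+1) ≤ c m := by
    intro m
    calc c (m+1) ≤ SB n p x lam1 lam2 tau (A (m+1)) (seq (m+1)).1 (seq (m+1)).2 :=
          hmin' (m+1) (seq (m+1)) (hfeas (m+1))
      _ = Sobj n p x lam1 lam2 tau (seq (m+1)).1 (seq (m+1)).2 :=
          SB_activeSet_eq n p x lam1 lam2 tau _ _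
      _ ≤ SB n p x lam1 lam2 tau (A m) (seq (m+1)).1 (seq (m+1)).2 :=
          Sobj_le_SB n p x lam1 lam2 tau hlam2 _ _ _
      _ = c m := rfl
  have hant : Antitone c := antitone_nat_of_succ_le hstep
  -- the range of c is finite
  have hfin : (Set.range c).Finite := by
    have hsub : Set.range c ⊆ Set.range (fun B : Finset (PairIdx n) =>
        if h : ∃ m, A m = B then c h.choose else 0) := by
      rintro y ⟨m, rfl⟩
      refine ⟨A m, ?_⟩
      have hex : ∃ m', A m' = A m := ⟨m, rfl⟩
      simp only [dif_pos hex]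
      exact hfac _ _ hex.choose_spec
    exact (Set.finite_range _).subset hsub
  obtain ⟨y, hy, hleast⟩ := hfin.toFinset.exists_min_image id
    (by simpa using Set.range_nonempty c)
  rw [Set.Finite.mem_toFinset] at hy
  obtain ⟨m0, rfl⟩ := hy
  have hleast' : ∀ m, c m0 ≤ c m := by
    intro m
    have : c m ∈ hfin.toFinset := by rw [Set.Finite.mem_toFinset]; exact ⟨m, rfl⟩
    exact hleast _ this
  have heq : ∀ m, m0 ≤ m → c m = c m0 := fun m hm =>
    le_antisymm (hant hm) (hleast' m)
  refine ⟨m0 + 1, ?_⟩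
  intro m hm z hz
  obtain ⟨k, rfl⟩ : ∃ k, m = k + 1 := ⟨m - 1, by omega⟩
  have hk : m0 ≤ k := by omega
  calc SB n p x lam1 lam2 tau (activeSet n p tau (seq (k+1)).2) (seq (k+1)).1 (seq (k+1)).2
      = Sobj n p x lam1 lam2 tau (seq (k+1)).1 (seq (k+1)).2 :=
        SB_activeSet_eq n p x lam1 lam2 tau _ _
    _ ≤ SB n p x lam1 lam2 tau (A k) (seq (k+1)).1 (seq (k+1)).2 :=
        Sobj_le_SB n p x lam1 lam2 tau hlam2 _ _ _
    _ = c k := rfl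
    _ = c (k+1) := by rw [heq k hk, heq (k+1) (by omega)]
    _ ≤ SB n p x lam1 lam2 tau (A (k+1)) z.1 z.2 := hmin' (k+1) z hz
    _ = SB n p x lam1 lam2 tau (activeSet n p tau (seq (k+1)).2) z.1 z.2 := rfl
end
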